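/- arXiv:1311.0817 — 3 statements merged into one kernel-verified Lean document; each statement's English description precedes it below -/
import Mathlib

section
/- Let f : ℝ → ℂ be given by a finite Fourier series f(t) = Σ_{|k| ≤ N} b_k·e^{ikt}, and let α ∈ (0, π) with sin α ≠ 0. If f satisfies the functional equation f'(t+α) + f'(t−α) = cot(α)·(f(t+α) − f(t−α)) for all t, then for every k with b_k ≠ 0 one has k·cos(kα)·sin(α) = cos(α)·sin(kα), i.e. k·tan α = tan(kα) whenever cos(kα)·cos(α) ≠ 0. -/
/-!
Shifting by `±α` multiplies the `k`-th coefficient of a trigonometric polynomial by `e^{±ikα}` and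
differentiating multiplies it by `ik`, so the functional equation says that the trigonometric
polynomial with coefficients `2i·b_k·(k cos kα − cot α · sin kα)` vanishes identically. The
characters `t ↦ e^{ikt}` are pairwise distinct, hence linearly independent by Dedekind's lemma, so
each of these coefficients is zero.
-/

open Real Complex Finset

noncomputable def trigPoly (s : Finset ℤ) (b : ℤ → ℂ) (t : ℝ) : ℂ :=
  ∑ k ∈ s, b k * exp (k * t * I)

lemma hasDerivAt_exp_int_mul_I (k : ℤ) (t : ℝ) :
    HasDerivAt (fun t : ℝ => exp (k * t * I)) (k * I * exp (k * t * I)) t := by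
  have h : HasDerivAt (fun z : ℂ => exp (k * z * I)) (exp (k * t * I) * (k * 1 * I)) t :=
    (((hasDerivAt_id (t : ℂ)).const_mul (k : ℂ)).mul_const I).cexp
  exact h.comp_ofReal.congr_deriv (by ring)

lemma hasDerivAt_trigPoly (s : Finset ℤ) (b : ℤ → ℂ) (t : ℝ) :
    HasDerivAt (trigPoly s b) (trigPoly s (fun k => k * I * b k) t) t :=
  (HasDerivAt.fun_sum fun k _ => (hasDerivAt_exp_int_mul_I k t).const_mul (b k)).congr_deriv
    (sum_congr rfl fun k _ => by ring)

lemma trigPoly_add (s : Finset ℤ) (b : ℤ → ℂ) (t a : ℝ) :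
    trigPoly s b (t + a) = trigPoly s (fun k => b k * exp (k * a * I)) t := by
  refine sum_congr rfl fun k _ => ?_
  rw [mul_assoc (b k), ← Complex.exp_add]
  push_cast
  ring_nf

noncomputable def expIntMulI (k : ℤ) : Multiplicative ℝ →* ℂ where
  toFun t := exp (k * t.toAdd * I)
  map_one' := by simp
  map_mul' s t := by
    simp only [toAdd_mul, ofReal_add, ← Complex.exp_add]
    ring_nf

lemma expIntMulI_injective : Function.Injective expIntMulI := by
  intro k j h
  have hk := hasDerivAt_exp_int_mul_I k 0
  have hkj : (fun t : ℝ => exp (k * t * I)) = fun t : ℝ => exp (j * t * I) :=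
    funext fun t => DFunLike.congr_fun h (Multiplicative.ofAdd t)
  rw [hkj] at hk
  simpa using hk.unique (hasDerivAt_exp_int_mul_I j 0)

lemma eq_zero_of_trigPoly_eq_zero {s : Finset ℤ} {b : ℤ → ℂ} (h : ∀ t, trigPoly s b t = 0) :
    ∀ k ∈ s, b k = 0 := by
  have hli := (linearIndependent_monoidHom (Multiplicative ℝ) ℂ).comp _ expIntMulI_injective
  refine linearIndependent_iff'.1 hli s b (funext fun t => ?_)
  simpa [trigPoly, expIntMulI] using h t.toAdd

theorem gutkin_fourier_condition_general (N : ℕ) (b : ℤ → ℂ) (α : ℝ)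
    (hsin : Real.sin α ≠ 0)
    (f : ℝ → ℂ)
    (hf : ∀ t : ℝ, f t = ∑ k ∈ Finset.Icc (-(N : ℤ)) (N : ℤ),
      b k * Complex.exp ((k : ℂ) * (t : ℂ) * Complex.I))
    (heq : ∀ t : ℝ, deriv f (t + α) + deriv f (t - α) =
      ((Real.cos α / Real.sin α : ℝ) : ℂ) * (f (t + α) - f (t - α))) :
    ∀ k ∈ Finset.Icc (-(N : ℤ)) (N : ℤ), b k ≠ 0 →
      (k : ℝ) * Real.cos (k * α) * Real.sin α = Real.cos α * Real.sin (k * α) := by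
  set s := Finset.Icc (-(N : ℤ)) (N : ℤ)
  have hf' : f = trigPoly s b := funext hf
  have hderiv : deriv f = trigPoly s (fun k => k * I * b k) :=
    funext fun t => hf' ▸ (hasDerivAt_trigPoly s b t).deriv
  have hcoeff : ∀ t, trigPoly s (fun k =>
      b k * (2 * I * ((k * Real.cos (k * α) - Real.cos α / Real.sin α * Real.sin (k * α) : ℝ)))) t
      = 0 := by
    intro t
    rw [← sub_eq_zero.2 (heq t), hderiv, hf', sub_eq_add_neg t α]
    simp only [trigPoly_add]
    simp only [trigPoly, mul_sum, ← sum_add_distrib, ← sum_sub_distrib]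
    refine sum_congr rfl fun k _ => ?_
    push_cast
    simp only [exp_mul_I, mul_neg, Complex.cos_neg, Complex.sin_neg]
    ring
  intro k hk hbk
  have hk0 := (mul_eq_zero.1 (eq_zero_of_trigPoly_eq_zero hcoeff k hk)).resolve_left hbk
  simp only [mul_eq_zero, two_ne_zero, I_ne_zero, ofReal_eq_zero, false_or] at hk0
  field_simp at hk0
  linarith

/-- Fourier analysis of the Gutkin functional equation: if a trigonometric
polynomial `f(t) = Σ_{|k| ≤ N} b_k e^{ikt}` satisfies
`f'(t+α) + f'(t−α) = cot α · (f(t+α) − f(t−α))` for all `t`, where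
`α ∈ (0, π)` with `sin α ≠ 0`, then every mode `k` with `b_k ≠ 0` satisfies
`k·cos(kα)·sin α = cos α·sin(kα)`. -/
theorem gutkin_fourier_condition (N : ℕ) (b : ℤ → ℂ) (α : ℝ)
    (hα : α ∈ Set.Ioo (0 : ℝ) π) (hsin : Real.sin α ≠ 0)
    (f : ℝ → ℂ)
    (hf : ∀ t : ℝ, f t = ∑ k ∈ Finset.Icc (-(N : ℤ)) (N : ℤ),
      b k * Complex.exp ((k : ℂ) * (t : ℂ) * Complex.I))
    (heq : ∀ t : ℝ, deriv f (t + α) + deriv f (t - α) =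
      ((Real.cos α / Real.sin α : ℝ) : ℂ) * (f (t + α) - f (t - α))) :
    ∀ k ∈ Finset.Icc (-(N : ℤ)) (N : ℤ), b k ≠ 0 →
      (k : ℝ) * Real.cos (k * α) * Real.sin α = Real.cos α * Real.sin (k * α) :=
  gutkin_fourier_condition_general N b α hsin f hf heq
end

section
/- In a Gutkin (2k,k)-gon, all k main diagonals v_i v_{i+k} have equal length. -/
open Real

/-- A Gutkin `(n,k)`-gon: a convex `n`-gon `v₀, …, v_{n−1}` (vertices in
strictly convex position) such that every `k`-diagonal `v_i v_{i+k}` makes the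
same contact angle `α` with the polygon at both of its endpoints. -/
structure GutkinPolygon (n k : ℕ) where
  v : ZMod n → ℂ
  α : ℝ
  hk : 2 ≤ k
  hkn : 2 * k ≤ n
  hconvex : ∀ i : ZMod n, v i ∉ convexHull ℝ (v '' {j | j ≠ i})
  hangle1 : ∀ i : ZMod n,
    EuclideanGeometry.angle (v (i + 1)) (v i) (v (i + (k : ZMod n))) = α
  hangle2 : ∀ i : ZMod n,
    EuclideanGeometry.angle (v (i + (k : ZMod n) - 1)) (v (i + (k : ZMod n))) (v i) = α

/-- The interior angle of the polygon at vertex `v_i`. -/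
noncomputable def GutkinPolygon.interiorAngle {n k : ℕ} (P : GutkinPolygon n k) (i : ZMod n) : ℝ :=
  EuclideanGeometry.angle (P.v (i - 1)) (P.v i) (P.v (i + 1))

/-!
Let `turn j` be the oriented angle from the diagonal `v j v (j+k)` to the side `v j v (j+1)`.
The contact-angle conditions give `|turn j| = α`, and strict convexity forces the other side at
`v j` to make the angle `-turn j` with the same diagonal. Reading the side `v j v (j+1)` from both
of its endpoints shows that the unit diagonal at `j+1` is the one at `j` rotated by
`π + turn j + turn (j+1)`. Since the diagonal at `j+k` is the one at `j` reversed,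
`v (j+1) v (j+k+1)` is `v j v (j+k)` plus the side at `j+k` minus the side at `j`; together this
is one complex relation between consecutive diagonal lengths.

When `turn (j+1) = turn j`, this relation at `j` and at `j+k` gives equal lengths. A sign change
`turn (j+1) = -turn j` forces `cos α > 0` and propagates to `j+2`, so the turns would alternate
all the way round; then all diagonals are parallel and every side crosses them in the same
direction, which is impossible for a closed polygon.
-/

open Complex

namespace ZMod

theorem forall_of_add_one {n : ℕ} [NeZero n] {p : ZMod n → Prop} (i : ZMod n) (hi : p i)
    (h : ∀ j, p j → p (j + 1)) (j : ZMod n) : p j := by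
  obtain ⟨m, rfl⟩ : ∃ m : ℕ, i + m = j := ⟨(j - i).val, by simp⟩
  induction m with
  | zero => simpa using hi
  | succ m ih => simpa [add_assoc] using h _ ih

theorem apply_eq_apply_of_add_one {n : ℕ} [NeZero n] {α : Type*} {f : ZMod n → α}
    (h : ∀ j, f (j + 1) = f j) (i j : ZMod n) : f i = f j :=
  forall_of_add_one (p := fun i => f i = f j) j rfl (fun i hi => (h i).trans hi) i

theorem natCast_ne_zero_of_lt {n m : ℕ} (h0 : 0 < m) (hm : m < n) : (m : ZMod n) ≠ 0 := by
  rw [Ne, natCast_eq_zero_iff]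
  exact Nat.not_dvd_of_pos_of_lt h0 hm

theorem add_one_ne_self {n : ℕ} (hn : 1 < n) (j : ZMod n) : j + 1 ≠ j := fun h =>
  natCast_ne_zero_of_lt one_pos hn (by simpa using h)

theorem sub_one_ne_add_one {n : ℕ} (hn : 2 < n) (j : ZMod n) : j - 1 ≠ j + 1 := fun h =>
  natCast_ne_zero_of_lt two_pos hn (by push_cast; linear_combination -h)

theorem add_natCast_add_natCast (k : ℕ) (j : ZMod (2 * k)) : j + k + k = j := by
  rw [add_assoc, ← two_mul]
  exact_mod_cast add_eq_left.2 (natCast_self (2 * k))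

end ZMod

theorem Complex.eq_norm_mul_exp_arg_div_mul {x y : ℂ} (hy : y ≠ 0) :
    x = ‖x‖ * exp ((x / y).arg * I) * (y / ‖y‖) := by
  have h := norm_mul_exp_arg_mul_I (x / y)
  have hy' : (‖y‖ : ℂ) ≠ 0 := by simpa using hy
  rw [norm_div, ofReal_div] at h
  field_simp at h ⊢
  linear_combination -h

namespace GutkinPolygon

section

variable {n k : ℕ} (P : GutkinPolygon n k)

def diag (j : ZMod n) : ℂ := P.v (j + k) - P.v j

def side (j : ZMod n) : ℂ := P.v (j + 1) - P.v j

noncomputable def turn (j : ZMod n) : ℝ := (P.side j / P.diag j).arg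

theorem two_lt (P : GutkinPolygon n k) : 2 < n := by
  have := P.hk; have := P.hkn; omega

theorem k_lt (P : GutkinPolygon n k) : k < n := by
  have := P.hk; have := P.hkn; omega

theorem neZero (P : GutkinPolygon n k) : NeZero n := ⟨by have := P.two_lt; omega⟩

theorem v_injective : Function.Injective P.v := fun a b h => by
  by_contra hab
  exact P.hconvex a (subset_convexHull ℝ _ ⟨b, Ne.symm hab, h.symm⟩)

theorem not_wbtw {a b c : ZMod n} (hba : b ≠ a) (hbc : b ≠ c) :
    ¬ Wbtw ℝ (P.v a) (P.v b) (P.v c) := fun h =>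
  P.hconvex b <| segment_subset_convexHull (s := P.v '' {j | j ≠ b})
    ⟨a, hba.symm, rfl⟩ ⟨c, hbc.symm, rfl⟩ h.mem_segment

theorem side_ne_zero (j : ZMod n) : P.side j ≠ 0 :=
  sub_ne_zero.2 <| P.v_injective.ne fun h =>
    ZMod.natCast_ne_zero_of_lt one_pos (by linarith [P.two_lt]) (by simpa using h)

theorem diag_ne_zero (j : ZMod n) : P.diag j ≠ 0 :=
  sub_ne_zero.2 <| P.v_injective.ne fun h =>
    ZMod.natCast_ne_zero_of_lt (by linarith [P.hk]) P.k_lt (by simpa using h)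

theorem abs_turn (j : ZMod n) : |P.turn j| = P.α := by
  rw [turn, ← Complex.angle_eq_abs_arg (P.side_ne_zero j) (P.diag_ne_zero j)]
  exact P.hangle1 j

theorem norm_side_pos (j : ZMod n) : 0 < ‖P.side j‖ := norm_pos_iff.2 (P.side_ne_zero j)

theorem norm_diag_pos (j : ZMod n) : 0 < ‖P.diag j‖ := norm_pos_iff.2 (P.diag_ne_zero j)

theorem turn_eq_or_eq_neg (i j : ZMod n) : P.turn i = P.turn j ∨ P.turn i = -P.turn j :=
  abs_eq_abs.1 (by rw [P.abs_turn, P.abs_turn])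

theorem cos_turn_eq (i j : ZMod n) : Real.cos (P.turn i) = Real.cos (P.turn j) := by
  rw [← Real.cos_abs, P.abs_turn, ← P.abs_turn j, Real.cos_abs]

theorem not_sameRay_side_neg_side_sub_one (j : ZMod n) :
    ¬ SameRay ℝ (P.side j) (-P.side (j - 1)) := fun h => by
  obtain ⟨r, hr, hrs⟩ := h.exists_nonneg_left (P.side_ne_zero j)
  have hj1 : P.side j +ᵥ P.v j = P.v (j + 1) := by simp [side]
  have hj2 : r • P.side j +ᵥ P.v j = P.v (j - 1) := by rw [hrs]; simp [side]
  have h1 := ZMod.add_one_ne_self (by linarith [P.two_lt]) j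
  have h2 := ZMod.add_one_ne_self (by linarith [P.two_lt]) (j - 1)
  have h3 := ZMod.sub_one_ne_add_one P.two_lt j
  rw [sub_add_cancel] at h2
  rcases wbtw_or_wbtw_smul_vadd_of_nonneg (P.v j) (P.side j) zero_le_one hr with h' | h' <;>
    rw [one_smul, hj1, hj2] at h'
  · exact P.not_wbtw h1 h3.symm h'
  · exact P.not_wbtw h2.symm h3 h'

theorem turn_ne_arg_neg_side_sub_one_div_diag (j : ZMod n) :
    P.turn j ≠ (-P.side (j - 1) / P.diag j).arg := fun h => by
  have hray := (Complex.sameRay_iff.2 (Or.inr (Or.inr h))).map (LinearMap.mulLeft ℝ (P.diag j))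
  simp only [LinearMap.mulLeft_apply, mul_div_cancel₀ _ (P.diag_ne_zero j)] at hray
  exact P.not_sameRay_side_neg_side_sub_one j hray

theorem side_eq (j : ZMod n) :
    P.side j = ‖P.side j‖ * exp (P.turn j * I) * (P.diag j / ‖P.diag j‖) :=
  eq_norm_mul_exp_arg_div_mul (P.diag_ne_zero j)

theorem diag_add_one (j : ZMod n) :
    P.diag (j + 1) = P.diag j + P.side (j + k) - P.side j := by
  simp only [diag, side, add_right_comm j 1]
  ring

end

section

variable {k : ℕ} (P : GutkinPolygon (2 * k) k)

theorem diag_add_k (j : ZMod (2 * k)) : P.diag (j + k) = -P.diag j := by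
  rw [diag, diag, ZMod.add_natCast_add_natCast]
  ring

-- Both sides at `v j` make the angle `α` with the diagonal; strict convexity puts them on
-- opposite sides of it.
theorem arg_neg_side_sub_one_div_diag (j : ZMod (2 * k)) :
    (-P.side (j - 1) / P.diag j).arg = -P.turn j := by
  have hne : -P.side (j - 1) ≠ 0 := neg_ne_zero.2 (P.side_ne_zero _)
  have habs : |(-P.side (j - 1) / P.diag j).arg| = |P.turn j| := by
    rw [P.abs_turn, ← Complex.angle_eq_abs_arg hne (P.diag_ne_zero j)]
    have h := P.hangle2 (j + k)
    rw [ZMod.add_natCast_add_natCast] at h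
    convert h using 2
    simp [side, diag, EuclideanGeometry.angle]
  exact (abs_eq_abs.1 habs).resolve_left (P.turn_ne_arg_neg_side_sub_one_div_diag j).symm

theorem side_sub_one_eq (j : ZMod (2 * k)) :
    P.side (j - 1) =
      -(‖P.side (j - 1)‖ * exp (-P.turn j * I) * (P.diag j / ‖P.diag j‖)) := by
  rw [← ofReal_neg, ← P.arg_neg_side_sub_one_div_diag, ← norm_neg (P.side _),
    ← eq_norm_mul_exp_arg_div_mul (P.diag_ne_zero j), neg_neg]

theorem sin_turn_ne_zero (j : ZMod (2 * k)) : Real.sin (P.turn j) ≠ 0 := by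
  have h := P.turn_ne_arg_neg_side_sub_one_div_diag j
  rw [P.arg_neg_side_sub_one_div_diag] at h
  have hπ : P.turn j ≠ π := fun hπ => by
    have := neg_pi_lt_arg (-P.side (j - 1) / P.diag j)
    rw [P.arg_neg_side_sub_one_div_diag, hπ] at this
    exact lt_irrefl _ this
  have hlt : P.turn j < π := (arg_le_pi _).lt_of_ne hπ
  rw [Ne, Real.sin_eq_zero_iff_of_lt_of_lt (x := P.turn j) (neg_pi_lt_arg _) hlt]
  exact fun h0 => h (by rw [h0, neg_zero])

theorem norm_diag_add_k (j : ZMod (2 * k)) : ‖P.diag (j + k)‖ = ‖P.diag j‖ := by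
  rw [diag_add_k, norm_neg]

theorem diag_add_one_div_norm (j : ZMod (2 * k)) :
    P.diag (j + 1) / ‖P.diag (j + 1)‖ =
      -(exp ((P.turn j + P.turn (j + 1) : ℝ) * I) * (P.diag j / ‖P.diag j‖)) := by
  have h := (P.side_eq j).symm.trans (add_sub_cancel_right j 1 ▸ P.side_sub_one_eq (j + 1))
  have hl : (‖P.side j‖ : ℂ) ≠ 0 := by simpa using P.side_ne_zero j
  have h' : exp (P.turn j * I) * (P.diag j / ‖P.diag j‖) =
      -(exp (-P.turn (j + 1) * I) * (P.diag (j + 1) / ‖P.diag (j + 1)‖)) :=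
    mul_left_cancel₀ hl (by linear_combination h)
  have hinv : exp (-P.turn (j + 1) * I) * exp (P.turn (j + 1) * I) = 1 := by
    rw [← Complex.exp_add, neg_mul, neg_add_cancel, Complex.exp_zero]
  rw [ofReal_add, add_mul, Complex.exp_add]
  linear_combination exp (P.turn (j + 1) * I) * h' - (P.diag (j + 1) / ‖P.diag (j + 1)‖) * hinv

theorem diag_recurrence (j : ZMod (2 * k)) :
    -(‖P.diag (j + 1)‖ * exp ((P.turn j + P.turn (j + 1) : ℝ) * I)) =
      ‖P.diag j‖ - ‖P.side (j + k)‖ * exp (P.turn (j + k) * I) -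
        ‖P.side j‖ * exp (P.turn j * I) := by
  have hd : (‖P.diag j‖ : ℂ) ≠ 0 := by simpa using P.diag_ne_zero j
  have hd' : (‖P.diag (j + 1)‖ : ℂ) ≠ 0 := by simpa using P.diag_ne_zero (j + 1)
  have hu : P.diag j / ‖P.diag j‖ ≠ 0 := div_ne_zero (P.diag_ne_zero j) hd
  have h1 := P.diag_add_one j
  rw [P.side_eq (j + k), P.diag_add_k, norm_neg, P.side_eq j] at h1
  have h2 := P.diag_add_one_div_norm j
  have hD : P.diag j = ‖P.diag j‖ * (P.diag j / ‖P.diag j‖) := (mul_div_cancel₀ _ hd).symm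
  have hD' : P.diag (j + 1) = ‖P.diag (j + 1)‖ * (P.diag (j + 1) / ‖P.diag (j + 1)‖) :=
    (mul_div_cancel₀ _ hd').symm
  refine mul_right_cancel₀ hu ?_
  rw [neg_div] at h1
  linear_combination (-(‖P.diag (j + 1)‖ : ℂ)) * h2 - hD' + h1 + hD

theorem diag_recurrence_re (j : ZMod (2 * k)) :
    -(‖P.diag (j + 1)‖ * Real.cos (P.turn j + P.turn (j + 1))) =
      ‖P.diag j‖ - ‖P.side (j + k)‖ * Real.cos (P.turn (j + k)) -
        ‖P.side j‖ * Real.cos (P.turn j) := by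
  simpa only [neg_re, sub_re, re_ofReal_mul, ofReal_re, exp_ofReal_mul_I_re] using
    congrArg re (P.diag_recurrence j)

theorem diag_recurrence_im (j : ZMod (2 * k)) :
    -(‖P.diag (j + 1)‖ * Real.sin (P.turn j + P.turn (j + 1))) =
      -(‖P.side (j + k)‖ * Real.sin (P.turn (j + k))) -
        ‖P.side j‖ * Real.sin (P.turn j) := by
  simpa only [neg_im, sub_im, im_ofReal_mul, ofReal_im, exp_ofReal_mul_I_im, zero_sub] using
    congrArg im (P.diag_recurrence j)

theorem turn_add_k_eq_neg_of_turn_add_one_eq_neg {j : ZMod (2 * k)}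
    (h : P.turn (j + 1) = -P.turn j) : P.turn (j + k) = -P.turn j := by
  have him := P.diag_recurrence_im j
  rw [h, add_neg_cancel, Real.sin_zero, mul_zero, neg_zero] at him
  refine (P.turn_eq_or_eq_neg (j + k) j).resolve_left fun hk => ?_
  rw [hk] at him
  have hzero : (‖P.side (j + k)‖ + ‖P.side j‖) * Real.sin (P.turn j) = 0 := by
    linear_combination him
  exact P.sin_turn_ne_zero j <| (mul_eq_zero.1 hzero).resolve_left
    (add_pos (P.norm_side_pos _) (P.norm_side_pos _)).ne'

theorem cos_turn_pos_of_turn_add_one_eq_neg {j : ZMod (2 * k)}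
    (h : P.turn (j + 1) = -P.turn j) : 0 < Real.cos (P.turn j) := by
  have hre := P.diag_recurrence_re j
  rw [h, add_neg_cancel, Real.cos_zero, mul_one, P.cos_turn_eq (j + k) j] at hre
  have hsum : (‖P.side (j + k)‖ + ‖P.side j‖) * Real.cos (P.turn j) =
      ‖P.diag j‖ + ‖P.diag (j + 1)‖ := by
    linear_combination hre
  have hpos : 0 < (‖P.side (j + k)‖ + ‖P.side j‖) * Real.cos (P.turn j) :=
    hsum ▸ add_pos (P.norm_diag_pos _) (P.norm_diag_pos _)
  exact pos_of_mul_pos_right hpos (by positivity)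

theorem cos_turn_eq_zero {j : ZMod (2 * k)} (h : P.turn (j + 1) = P.turn j)
    (hk : P.turn (j + k) = -P.turn j) : Real.cos (P.turn j) = 0 := by
  have him := P.diag_recurrence_im j
  have him' := P.diag_recurrence_im (j + k)
  rw [h, hk, ← two_mul, Real.sin_two_mul, Real.sin_neg] at him
  rw [ZMod.add_natCast_add_natCast, add_right_comm j (k : ZMod (2 * k)) 1, P.norm_diag_add_k, hk,
    Real.sin_neg] at him'
  have hprod : ‖P.diag (j + 1)‖ * (Real.sin (P.turn j) * Real.cos (P.turn j)) = 0 := by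
    rcases P.turn_eq_or_eq_neg (j + 1 + k) j with h' | h' <;>
      rw [h'] at him'
    · rw [neg_add_cancel, Real.sin_zero] at him'
      linear_combination (-1 / 2 : ℝ) * (him - him')
    · rw [← neg_add, ← two_mul, Real.sin_neg, Real.sin_two_mul] at him'
      linear_combination (-1 / 4 : ℝ) * (him - him')
  rcases mul_eq_zero.1 hprod with hd | hsc
  · exact absurd hd (P.norm_diag_pos _).ne'
  · exact (mul_eq_zero.1 hsc).resolve_left (P.sin_turn_ne_zero j)

theorem norm_diag_add_one_of_turn_add_one_eq {j : ZMod (2 * k)} (h : P.turn (j + 1) = P.turn j) :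
    ‖P.diag (j + 1)‖ = ‖P.diag j‖ := by
  have hre := P.diag_recurrence_re j
  rw [h, ← two_mul, Real.cos_two_mul] at hre
  rcases P.turn_eq_or_eq_neg (j + k) j with hk | hk
  · have him := P.diag_recurrence_im j
    rw [h, hk, ← two_mul, Real.sin_two_mul] at him
    have hsum :
        ‖P.side (j + k)‖ + ‖P.side j‖ = 2 * ‖P.diag (j + 1)‖ * Real.cos (P.turn j) :=
      mul_right_cancel₀ (P.sin_turn_ne_zero j) (by linear_combination him)
    rw [hk] at hre
    linear_combination hre - Real.cos (P.turn j) * hsum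
  · have hc := P.cos_turn_eq_zero h hk
    rw [hk, Real.cos_neg] at hre
    linear_combination hre +
      (2 * ‖P.diag (j + 1)‖ * Real.cos (P.turn j) - ‖P.side (j + k)‖ - ‖P.side j‖) * hc

theorem turn_add_one_add_one_eq_neg {j : ZMod (2 * k)} (h : P.turn (j + 1) = -P.turn j) :
    P.turn (j + 1 + 1) = -P.turn (j + 1) := by
  refine (P.turn_eq_or_eq_neg _ _).resolve_left fun h2 => ?_
  have hc := P.cos_turn_pos_of_turn_add_one_eq_neg h
  have hk := P.turn_add_k_eq_neg_of_turn_add_one_eq_neg h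
  rcases P.turn_eq_or_eq_neg (j + 1 + k) (j + 1) with h3 | h3
  · have h0 := P.cos_turn_eq_zero (j := j + k) (by rw [add_right_comm, h3, h, hk])
      (by rw [ZMod.add_natCast_add_natCast, hk, neg_neg])
    rw [P.cos_turn_eq (j + k) j] at h0
    exact hc.ne' h0
  · have h0 := P.cos_turn_eq_zero h2 h3
    rw [P.cos_turn_eq (j + 1) j] at h0
    exact hc.ne' h0

theorem not_forall_turn_add_one_eq_neg : ¬ ∀ j, P.turn (j + 1) = -P.turn j := fun h => by
  have := P.neZero
  -- The unit diagonals alternate in sign along with the turns, so `q` is constant, and every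
  -- side has imaginary part `‖side j‖` relative to it: the sides cannot close up.
  set q : ZMod (2 * k) → ℂ :=
    fun j => Real.sin (P.turn j) * (P.diag j / ‖P.diag j‖) with hq_def
  have hq : ∀ j, q (j + 1) = q j := fun j => by
    simp only [hq_def, P.diag_add_one_div_norm j, h j, add_neg_cancel, ofReal_zero, zero_mul,
      Complex.exp_zero, Real.sin_neg, ofReal_neg]
    ring
  have him : ∀ j, (P.side j / q 0).im = ‖P.side j‖ := fun j => by
    rw [ZMod.apply_eq_apply_of_add_one hq 0 j, hq_def]
    nth_rw 1 [P.side_eq j]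
    rw [show (‖P.side j‖ : ℂ) * exp (P.turn j * I) * (P.diag j / ‖P.diag j‖) /
        (Real.sin (P.turn j) * (P.diag j / ‖P.diag j‖)) =
        ‖P.side j‖ * exp (P.turn j * I) / Real.sin (P.turn j) by
      field_simp [P.diag_ne_zero j]]
    rw [div_ofReal_im, im_ofReal_mul, exp_ofReal_mul_I_im,
      mul_div_cancel_right₀ _ (P.sin_turn_ne_zero j)]
  have hsum : ∑ j, P.side j = 0 := by
    simp only [side, Finset.sum_sub_distrib, sub_eq_zero]
    exact Equiv.sum_comp (Equiv.addRight 1) P.v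
  have hzero : ∑ j, ‖P.side j‖ = 0 := by
    simpa [hsum, him] using congrArg im (Finset.sum_div Finset.univ P.side (q 0)).symm
  exact (Finset.sum_pos (fun j _ => P.norm_side_pos j) Finset.univ_nonempty).ne' hzero

theorem turn_add_one_ne_neg (j : ZMod (2 * k)) : P.turn (j + 1) ≠ -P.turn j := fun hj =>
  have := P.neZero
  P.not_forall_turn_add_one_eq_neg
    (ZMod.forall_of_add_one j hj fun _ => P.turn_add_one_add_one_eq_neg)

theorem norm_diag_add_one (j : ZMod (2 * k)) : ‖P.diag (j + 1)‖ = ‖P.diag j‖ :=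
  P.norm_diag_add_one_of_turn_add_one_eq
    ((P.turn_eq_or_eq_neg _ _).resolve_right (P.turn_add_one_ne_neg j))

end

end GutkinPolygon

/-- In a Gutkin `(2k,k)`-gon, all main diagonals `v_i v_{i+k}` have equal
length. -/
theorem gutkin_2k_k_diagonals_equal (k : ℕ) (P : GutkinPolygon (2 * k) k) :
    ∀ i j : ZMod (2 * k),
      dist (P.v i) (P.v (i + (k : ZMod (2 * k)))) =
        dist (P.v j) (P.v (j + (k : ZMod (2 * k)))) := by
  have := P.neZero
  intro i j
  rw [dist_comm, dist_comm (P.v j), dist_eq_norm, dist_eq_norm]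
  exact ZMod.apply_eq_apply_of_add_one (f := fun j => ‖P.diag j‖) P.norm_diag_add_one i j
end

section
/- For ω = exp(2πi/n) with n ≥ 3 and integers k, r with ω^{r+1} ≠ 1 and ω^{r−1} ≠ 1, the identity (ω^{k(r+1)} − 1)/(ω^{r+1} − 1) = ω^{k−1}·(ω^{k(r−1)} − 1)/(ω^{r−1} − 1) holds if and only if tan(krπ/n)·tan(π/n) = tan(kπ/n)·tan(rπ/n). -/
/-!
Write `ω = u²` with `u = exp (iπ/n)`. Then `ω^m - 1 = 2i u^m sin (mπ/n)`, and after
cross-multiplying, the powers of `u` on the two sides coincide, so the identity becomes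
`sin (k(r+1)π/n) sin ((r-1)π/n) = sin (k(r-1)π/n) sin ((r+1)π/n)`. Expanding by the addition
formulas with `a = krπ/n`, `b = kπ/n`, `c = rπ/n`, `d = π/n`, the difference of the two sides is
`2 (cos a sin b sin c cos d - sin a cos b cos c sin d)`, which vanishes exactly when
`tan a tan d = tan b tan c`.
-/

open Real Complex

theorem exp_mul_I_sq_zpow_sub_one (θ : ℝ) (m : ℤ) :
    (exp (θ * I) ^ 2) ^ m - 1 = 2 * I * exp (θ * I) ^ m * (Real.sin (m * θ) : ℂ) := by
  set w := exp (θ * I) ^ m with hw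
  have hpow : (exp (θ * I) ^ 2) ^ m = w ^ 2 := by
    rw [hw, ← zpow_natCast, ← zpow_natCast, ← zpow_mul, ← zpow_mul, Int.mul_comm]
  have hsin : 2 * (Real.sin (m * θ) : ℂ) = w⁻¹ * I - w * I := by
    rw [ofReal_sin, two_sin, hw, ← exp_int_mul, neg_mul, ← Complex.exp_neg]
    push_cast
    ring_nf
  rw [hpow]
  linear_combination -(I * w) * hsin + (w ^ 2 - w * w⁻¹) * I_sq +
    mul_inv_cancel₀ (zpow_ne_zero m (exp_ne_zero (θ * I)))

theorem geom_quotient_eq_iff_sin_mul_sin_eq {θ : ℝ} {ω : ℂ} (hω : ω = exp (θ * I) ^ 2)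
    {k r : ℤ} (h1 : ω ^ (r + 1) ≠ 1) (h2 : ω ^ (r - 1) ≠ 1) :
    (ω ^ (k * (r + 1)) - 1) / (ω ^ (r + 1) - 1) =
        ω ^ (k - 1) * ((ω ^ (k * (r - 1)) - 1) / (ω ^ (r - 1) - 1)) ↔
      Real.sin ((k * (r + 1) : ℤ) * θ) * Real.sin ((r - 1 : ℤ) * θ) =
        Real.sin ((k * (r - 1) : ℤ) * θ) * Real.sin ((r + 1 : ℤ) * θ) := by
  rw [mul_div_assoc', div_eq_div_iff (sub_ne_zero.2 h1) (sub_ne_zero.2 h2), hω,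
    exp_mul_I_sq_zpow_sub_one, exp_mul_I_sq_zpow_sub_one, exp_mul_I_sq_zpow_sub_one,
    exp_mul_I_sq_zpow_sub_one]
  generalize Real.sin ((k * (r + 1) : ℤ) * θ) = s₁, Real.sin ((r - 1 : ℤ) * θ) = s₂,
    Real.sin ((k * (r - 1) : ℤ) * θ) = s₃, Real.sin ((r + 1 : ℤ) * θ) = s₄
  set w := exp (θ * I)
  have hw : w ≠ 0 := exp_ne_zero _
  set c := (2 * I) ^ 2 * (w ^ (k * (r + 1)) * w ^ (r - 1)) with hc_def
  have hc : c ≠ 0 :=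
    mul_ne_zero (by simp) (mul_ne_zero (zpow_ne_zero _ hw) (zpow_ne_zero _ hw))
  have hexp : w ^ (k * (r + 1)) * w ^ (r - 1) =
      (w ^ 2) ^ (k - 1) * w ^ (k * (r - 1)) * w ^ (r + 1) := by
    rw [← zpow_natCast, ← zpow_mul, ← zpow_add₀ hw, ← zpow_add₀ hw, ← zpow_add₀ hw]
    ring_nf
  have hl : 2 * I * w ^ (k * (r + 1)) * s₁ * (2 * I * w ^ (r - 1) * s₂) =
      c * (s₁ * s₂ : ℝ) := by
    push_cast
    ring
  have hr : (w ^ 2) ^ (k - 1) * (2 * I * w ^ (k * (r - 1)) * s₃) * (2 * I * w ^ (r + 1) * s₄) =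
      c * (s₃ * s₄ : ℝ) := by
    rw [hc_def, hexp]
    push_cast
    ring
  rw [hl, hr, mul_right_inj' hc, ofReal_inj]

theorem sin_add_mul_sin_sub_sub_sin_sub_mul_sin_add (a b c d : ℝ) :
    Real.sin (a + b) * Real.sin (c - d) - Real.sin (a - b) * Real.sin (c + d) =
      2 * (Real.cos a * Real.sin b * Real.sin c * Real.cos d -
        Real.sin a * Real.cos b * Real.cos c * Real.sin d) := by
  simp only [Real.sin_add, Real.sin_sub]
  ring

theorem sin_add_mul_sin_sub_eq_iff_tan_mul_tan_eq {a b c d : ℝ} (ha : Real.cos a ≠ 0)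
    (hb : Real.cos b ≠ 0) (hc : Real.cos c ≠ 0) (hd : Real.cos d ≠ 0) :
    Real.sin (a + b) * Real.sin (c - d) = Real.sin (a - b) * Real.sin (c + d) ↔
      Real.tan a * Real.tan d = Real.tan b * Real.tan c := by
  rw [← sub_eq_zero, sin_add_mul_sin_sub_sub_sin_sub_mul_sin_add, Real.tan_eq_sin_div_cos,
    Real.tan_eq_sin_div_cos, Real.tan_eq_sin_div_cos, Real.tan_eq_sin_div_cos, div_mul_div_comm,
    div_mul_div_comm, div_eq_div_iff (mul_ne_zero ha hd) (mul_ne_zero hb hc)]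
  constructor
  · intro h
    linear_combination (-1 / 2 : ℝ) * h
  · intro h
    linear_combination -2 * h

theorem eigenvalue_iff_tan_equation_general (n : ℕ) (k r : ℤ)
    (ω : ℂ) (hω : ω = Complex.exp (2 * π * Complex.I / n))
    (h1 : ω ^ (r + 1) ≠ 1) (h2 : ω ^ (r - 1) ≠ 1)
    (hc1 : Real.cos ((k : ℝ) * r * π / n) ≠ 0)
    (hc2 : Real.cos (π / n) ≠ 0)
    (hc3 : Real.cos ((k : ℝ) * π / n) ≠ 0)
    (hc4 : Real.cos ((r : ℝ) * π / n) ≠ 0) :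
    (ω ^ (k * (r + 1)) - 1) / (ω ^ (r + 1) - 1) =
        ω ^ (k - 1) * ((ω ^ (k * (r - 1)) - 1) / (ω ^ (r - 1) - 1)) ↔
      Real.tan ((k : ℝ) * r * π / n) * Real.tan (π / n) =
        Real.tan ((k : ℝ) * π / n) * Real.tan ((r : ℝ) * π / n) := by
  have hω' : ω = exp ((π / n : ℝ) * I) ^ 2 := by
    rw [hω, ← Complex.exp_nat_mul]
    push_cast
    ring_nf
  rw [geom_quotient_eq_iff_sin_mul_sin_eq hω' h1 h2,
    ← sin_add_mul_sin_sub_eq_iff_tan_mul_tan_eq hc1 hc3 hc4 hc2]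
  congr! 3 <;> push_cast <;> ring

/-- Equivalence between the vanishing of the circulant eigenvalue `λ_r`
(rewritten via geometric series) and the trigonometric Diophantine equation:
for `ω = e^{2πi/n}` with `n ≥ 3` and integers `k, r` with `ω^{r+1} ≠ 1`,
`ω^{r−1} ≠ 1`, and all four tangents defined,
`(ω^{k(r+1)} − 1)/(ω^{r+1} − 1) = ω^{k−1}·(ω^{k(r−1)} − 1)/(ω^{r−1} − 1)`
holds iff `tan(krπ/n)·tan(π/n) = tan(kπ/n)·tan(rπ/n)`. -/
theorem eigenvalue_iff_tan_equation (n : ℕ) (hn : 3 ≤ n) (k r : ℤ)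
    (ω : ℂ) (hω : ω = Complex.exp (2 * π * Complex.I / n))
    (h1 : ω ^ (r + 1) ≠ 1) (h2 : ω ^ (r - 1) ≠ 1)
    (hc1 : Real.cos ((k : ℝ) * r * π / n) ≠ 0)
    (hc2 : Real.cos (π / n) ≠ 0)
    (hc3 : Real.cos ((k : ℝ) * π / n) ≠ 0)
    (hc4 : Real.cos ((r : ℝ) * π / n) ≠ 0) :
    (ω ^ (k * (r + 1)) - 1) / (ω ^ (r + 1) - 1) =
        ω ^ (k - 1) * ((ω ^ (k * (r - 1)) - 1) / (ω ^ (r - 1) - 1)) ↔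
      Real.tan ((k : ℝ) * r * π / n) * Real.tan (π / n) =
        Real.tan ((k : ℝ) * π / n) * Real.tan ((r : ℝ) * π / n) :=
  eigenvalue_iff_tan_equation_general n k r ω hω h1 h2 hc1 hc2 hc3 hc4
end
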